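/- arXiv:2102.13339 — 10 statements merged into one kernel-verified Lean document; each statement's English description precedes it below -/
import Mathlib

section
/- Let (t1, t2, t3) be a generic triple of nonzero complex numbers, i.e. t_p ≠ t_q and t_p ≠ −t_q for all p ≠ q. If both ⟦t2,t1⟧/⟦t3,t1⟧ and ⟦t3,t2⟧/⟦t3,t1⟧ are real numbers, then either |t1| = |t2| = |t3|, or both t1/t2 and t2/t3 are real numbers. -/
/-- The bracket `⟦x,y⟧ := x/y − y/x` for complex numbers. -/
noncomputable def brkt (x y : ℂ) : ℂ := x / y - y / x

/-!
Normalize by `t2`: with `u = t1/t2` and `v = t3/t2`, the sum and difference of the two given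
ratios are `(1 + uv)/(u + v)` and `(1 - uv)/(v - u)`. In coordinates, the imaginary parts of
these two numbers have numerators `Im v (|u|² - 1) ± Im u (|v|² - 1)`, so both products vanish.
Genericity excludes `u, v = ±1`, leaving `|u| = |v| = 1` or `u, v` real.
-/

namespace Complex

theorem im_mul_normSq_sub_one_eq_zero {u v : ℂ} (huv : u ≠ v) (huv' : u ≠ -v)
    (hp : ((1 + u * v) / (u + v)).im = 0) (hm : ((1 - u * v) / (v - u)).im = 0) :
    u.im * (normSq v - 1) = 0 ∧ v.im * (normSq u - 1) = 0 := by
  have hp₀ : normSq (u + v) ≠ 0 :=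
    mt normSq_eq_zero.mp fun h ↦ huv' (eq_neg_of_add_eq_zero_left h)
  have hm₀ : normSq (v - u) ≠ 0 := mt normSq_eq_zero.mp (sub_ne_zero.mpr huv.symm)
  rw [div_im, ← sub_div, div_eq_zero_iff, or_iff_left hp₀] at hp
  rw [div_im, ← sub_div, div_eq_zero_iff, or_iff_left hm₀] at hm
  simp only [normSq_apply, add_re, add_im, sub_re, sub_im, mul_re, mul_im, one_re, one_im]
    at hp hm ⊢
  exact ⟨by linear_combination (hp - hm) / 2, by linear_combination (hp + hm) / 2⟩

theorem eq_one_or_eq_neg_one_of_im_eq_zero {z : ℂ} (him : z.im = 0) (hz : normSq z = 1) :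
    z = 1 ∨ z = -1 := by
  rw [normSq_apply, him, mul_zero, add_zero, mul_self_eq_one_iff] at hz
  rcases hz with h | h
  · exact .inl (ext h him)
  · exact .inr (ext (by simp [h]) (by simp [him]))

theorem norm_eq_one_or_im_eq_zero {u v : ℂ} (hu : u ≠ 1) (hu' : u ≠ -1) (hv : v ≠ 1)
    (hv' : v ≠ -1) (huv : u ≠ v) (huv' : u ≠ -v)
    (hp : ((1 + u * v) / (u + v)).im = 0) (hm : ((1 - u * v) / (v - u)).im = 0) :
    (‖u‖ = 1 ∧ ‖v‖ = 1) ∨ (u.im = 0 ∧ v.im = 0) := by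
  obtain ⟨hu₀, hv₀⟩ := im_mul_normSq_sub_one_eq_zero huv huv' hp hm
  have hu₁ : ¬ (u.im = 0 ∧ normSq u = 1) := fun h ↦
    (eq_one_or_eq_neg_one_of_im_eq_zero h.1 h.2).elim hu hu'
  have hv₁ : ¬ (v.im = 0 ∧ normSq v = 1) := fun h ↦
    (eq_one_or_eq_neg_one_of_im_eq_zero h.1 h.2).elim hv hv'
  simp only [← pow_eq_one_iff_of_nonneg (norm_nonneg _) two_ne_zero, Complex.sq_norm]
  rw [mul_eq_zero, sub_eq_zero] at hu₀ hv₀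
  tauto

end Complex

open Complex

theorem brkt_eq_sub_mul_add_div {x y : ℂ} (hx : x ≠ 0) (hy : y ≠ 0) :
    brkt x y = (x - y) * (x + y) / (x * y) := by
  rw [brkt]
  field_simp
  ring

theorem brkt_add_brkt_div_brkt {x y z : ℂ} (hx : x ≠ 0) (hy : y ≠ 0) (hz : z ≠ 0)
    (hxz : x ≠ z) (hxz' : x ≠ -z) :
    (brkt y x + brkt z y) / brkt z x = (1 + x / y * (z / y)) / (x / y + z / y) := by
  have h₁ : x + z ≠ 0 := fun h ↦ hxz' (eq_neg_of_add_eq_zero_left h)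
  have h₂ : z - x ≠ 0 := sub_ne_zero.mpr hxz.symm
  rw [brkt_eq_sub_mul_add_div hy hx, brkt_eq_sub_mul_add_div hz hy,
    brkt_eq_sub_mul_add_div hz hx, add_comm z x]
  field_simp
  ring

theorem brkt_sub_brkt_div_brkt {x y z : ℂ} (hx : x ≠ 0) (hy : y ≠ 0) (hz : z ≠ 0)
    (hxz : x ≠ z) (hxz' : x ≠ -z) :
    (brkt y x - brkt z y) / brkt z x = (1 - x / y * (z / y)) / (z / y - x / y) := by
  have h₁ : x + z ≠ 0 := fun h ↦ hxz' (eq_neg_of_add_eq_zero_left h)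
  have h₂ : z - x ≠ 0 := sub_ne_zero.mpr hxz.symm
  rw [brkt_eq_sub_mul_add_div hy hx, brkt_eq_sub_mul_add_div hz hy,
    brkt_eq_sub_mul_add_div hz hx, add_comm z x]
  field_simp
  ring

/-- Lemma 7.1(i): for a generic triple of nonzero complex numbers, if
`⟦t2,t1⟧/⟦t3,t1⟧` and `⟦t3,t2⟧/⟦t3,t1⟧` are real, then either all three have the
same absolute value, or `t1/t2` and `t2/t3` are real. -/
theorem generic_triple_real (t1 t2 t3 : ℂ)
    (h1 : t1 ≠ 0) (h2 : t2 ≠ 0) (h3 : t3 ≠ 0)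
    (h12 : t1 ≠ t2) (h12' : t1 ≠ -t2)
    (h13 : t1 ≠ t3) (h13' : t1 ≠ -t3)
    (h23 : t2 ≠ t3) (h23' : t2 ≠ -t3)
    (ha : (brkt t2 t1 / brkt t3 t1).im = 0)
    (hb : (brkt t3 t2 / brkt t3 t1).im = 0) :
    (‖t1‖ = ‖t2‖ ∧ ‖t2‖ = ‖t3‖) ∨
      ((t1 / t2).im = 0 ∧ (t2 / t3).im = 0) := by
  have hp : ((1 + t1 / t2 * (t3 / t2)) / (t1 / t2 + t3 / t2)).im = 0 := by
    rw [← brkt_add_brkt_div_brkt h1 h2 h3 h13 h13', add_div, add_im, ha, hb, add_zero]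
  have hm : ((1 - t1 / t2 * (t3 / t2)) / (t3 / t2 - t1 / t2)).im = 0 := by
    rw [← brkt_sub_brkt_div_brkt h1 h2 h3 h13 h13', sub_div, sub_im, ha, hb, sub_zero]
  have hne {x y : ℂ} (h : x ≠ y) : x / t2 ≠ y / t2 := (div_left_inj' h2).not.mpr h
  rcases norm_eq_one_or_im_eq_zero (by rw [← div_self h2]; exact hne h12)
      (by rw [← neg_div_self h2]; exact hne h12') (by rw [← div_self h2]; exact hne h23.symm)
      (by rw [← neg_div_self h2]; exact hne fun h ↦ h23' (by rw [h, neg_neg]))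
      (hne h13) (by rw [← neg_div]; exact hne h13') hp hm with ⟨hu, hv⟩ | ⟨hu, hv⟩
  · have ht2 : ‖t2‖ ≠ 0 := norm_ne_zero_iff.mpr h2
    rw [norm_div, div_eq_one_iff_eq ht2] at hu hv
    exact .inl ⟨hu, hv.symm⟩
  · exact .inr ⟨hu, by rw [← inv_div, inv_im, hv, neg_zero, zero_div]⟩
end

section
/- Let (t1, t2, t3) be a generic triple of nonzero complex numbers, i.e. t_p ≠ t_q and t_p ≠ −t_q for all p ≠ q. If both ⟦t2,t1⟧/⟦t3,t1⟧ and ⟦t3,t2⟧/⟦t3,t1⟧ are purely imaginary, then both t1/t2 and t2/t3 are purely imaginary. -/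
theorem brkt_eq_inv_sub (x y : ℂ) : brkt x y = (y / x)⁻¹ - y / x := by
  rw [brkt, inv_div]

namespace Complex

theorem im_eq_zero_of_sq_eq_ofReal {z : ℂ} {x : ℝ} (h : z ^ 2 = x) (hx : 0 ≤ x) :
    z.im = 0 := by
  have hre := congrArg re h
  have him := congrArg im h
  simp only [sq, mul_re, mul_im, ofReal_re, ofReal_im] at hre him
  rcases mul_eq_zero.1 (show z.re * z.im = 0 by linarith) with h0 | h0
  · nlinarith
  · exact h0

theorem one_sub_sq_eq_ofReal_of_re_eq_zero {z : ℂ} (hz : z.re = 0) :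
    1 - z ^ 2 = ((1 + z.im ^ 2 : ℝ) : ℂ) := by
  apply Complex.ext <;> simp [sq, hz]

theorem im_eq_zero_of_im_one_sub_div_one_add {q : ℂ} (hq : 1 + q ≠ 0)
    (h : ((1 - q) / (1 + q)).im = 0) : q.im = 0 := by
  have hN : normSq (1 + q) ≠ 0 := by rwa [Ne, normSq_eq_zero]
  simp only [div_im, sub_re, sub_im, add_re, add_im, one_re, one_im] at h
  field_simp at h
  linarith

theorem re_mul_eq_zero_of_re_eq_zero_of_im_eq_zero {z w : ℂ} (hz : z.re = 0) (hw : w.im = 0) :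
    (z * w).re = 0 := by
  simp [mul_re, hz, hw]

theorem re_eq_zero_of_re_add_div_eq_zero {u v : ℂ} (hp : 1 + u * v ≠ 0) (hm : 1 - u * v ≠ 0)
    (hs : ((u + v) / (1 + u * v)).re = 0) (hd : ((u - v) / (1 - u * v)).re = 0) :
    u.re = 0 ∧ v.re = 0 := by
  set q := u * v with hq
  set s := (u + v) / (1 + q)
  set d := (u - v) / (1 - q)
  have hus : u + v = s * (1 + q) := (div_mul_cancel₀ _ hp).symm
  have hud : u - v = d * (1 - q) := (div_mul_cancel₀ _ hm).symm
  have key : (1 + q) ^ 2 * (1 - s ^ 2) = (1 - q) ^ 2 * (1 - d ^ 2) := by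
    linear_combination (u + v + s * (1 + q)) * hus - (u - v + d * (1 - q)) * hud + 4 * hq
  clear_value q s d
  rw [one_sub_sq_eq_ofReal_of_re_eq_zero hs, one_sub_sq_eq_ofReal_of_re_eq_zero hd] at key
  have hcayley : ((1 - q) / (1 + q)) ^ 2 = ((1 + s.im ^ 2) / (1 + d.im ^ 2) : ℝ) := by
    have : (1 + d.im ^ 2 : ℂ) ≠ 0 := by exact_mod_cast (by positivity : (1 + d.im ^ 2 : ℝ) ≠ 0)
    push_cast at key ⊢
    field_simp
    linear_combination -key
  have hq_im : q.im = 0 :=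
    im_eq_zero_of_im_one_sub_div_one_add hp (im_eq_zero_of_sq_eq_ofReal hcayley (by positivity))
  have hs' := re_mul_eq_zero_of_re_eq_zero_of_im_eq_zero hs (show (1 + q).im = 0 by simp [hq_im])
  have hd' := re_mul_eq_zero_of_re_eq_zero_of_im_eq_zero hd (show (1 - q).im = 0 by simp [hq_im])
  have hu : u = (s * (1 + q) + d * (1 - q)) / 2 := by linear_combination (hus + hud) / 2
  have hv : v = (s * (1 + q) - d * (1 - q)) / 2 := by linear_combination (hus - hud) / 2
  constructor
  · rw [hu, div_ofNat_re, add_re, hs', hd']; simp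
  · rw [hv, div_ofNat_re, sub_re, hs', hd']; simp

theorem re_eq_zero_of_re_inv_sub_div_eq_zero {u v : ℂ} (hu : u ≠ 0) (hv : v ≠ 0)
    (huv : u * v ≠ 1) (huv' : u * v ≠ -1)
    (hα : ((u⁻¹ - u) / ((u * v)⁻¹ - u * v)).re = 0)
    (hβ : ((v⁻¹ - v) / ((u * v)⁻¹ - u * v)).re = 0) :
    u.re = 0 ∧ v.re = 0 := by
  have hp : 1 + u * v ≠ 0 := fun h => huv' (by linear_combination h)
  have hm : 1 - u * v ≠ 0 := sub_ne_zero.2 (Ne.symm huv)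
  have hden : (u * v)⁻¹ - u * v ≠ 0 := by
    rw [show (u * v)⁻¹ - u * v = (1 - u * v) * (1 + u * v) / (u * v) by field_simp; ring]
    exact div_ne_zero (mul_ne_zero hm hp) (mul_ne_zero hu hv)
  have hsum : (u + v) / (1 + u * v)
      = (u⁻¹ - u) / ((u * v)⁻¹ - u * v) + (v⁻¹ - v) / ((u * v)⁻¹ - u * v) := by
    rw [← add_div, div_eq_div_iff hp hden]
    field_simp
    ring
  have hdiff : (u - v) / (1 - u * v)
      = (v⁻¹ - v) / ((u * v)⁻¹ - u * v) - (u⁻¹ - u) / ((u * v)⁻¹ - u * v) := by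
    rw [div_sub_div_same, div_eq_div_iff hm hden]
    field_simp
    ring
  refine re_eq_zero_of_re_add_div_eq_zero hp hm ?_ ?_
  · rw [hsum, add_re, hα, hβ, add_zero]
  · rw [hdiff, sub_re, hα, hβ, sub_zero]

end Complex

theorem generic_triple_imaginary_general (t1 t2 t3 : ℂ)
    (h1 : t1 ≠ 0) (h2 : t2 ≠ 0) (h3 : t3 ≠ 0)
    (h13 : t1 ≠ t3) (h13' : t1 ≠ -t3)
    (ha : (brkt t2 t1 / brkt t3 t1).re = 0)
    (hb : (brkt t3 t2 / brkt t3 t1).re = 0) :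
    (t1 / t2).re = 0 ∧ (t2 / t3).re = 0 := by
  have hq : t1 / t3 = t1 / t2 * (t2 / t3) := (div_mul_div_cancel₀ h2).symm
  simp only [brkt_eq_inv_sub, hq] at ha hb
  refine Complex.re_eq_zero_of_re_inv_sub_div_eq_zero (div_ne_zero h1 h2) (div_ne_zero h2 h3)
    ?_ ?_ ha hb
  · rw [← hq]
    exact div_ne_one_of_ne h13
  · rw [← hq]
    exact fun h => h13' (by linear_combination (div_eq_iff h3).1 h)

/-- Lemma 7.1(ii): for a generic triple of nonzero complex numbers, if
`⟦t2,t1⟧/⟦t3,t1⟧` and `⟦t3,t2⟧/⟦t3,t1⟧` are purely imaginary, then `t1/t2` and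
`t2/t3` are purely imaginary. -/
theorem generic_triple_imaginary (t1 t2 t3 : ℂ)
    (h1 : t1 ≠ 0) (h2 : t2 ≠ 0) (h3 : t3 ≠ 0)
    (h12 : t1 ≠ t2) (h12' : t1 ≠ -t2)
    (h13 : t1 ≠ t3) (h13' : t1 ≠ -t3)
    (h23 : t2 ≠ t3) (h23' : t2 ≠ -t3)
    (ha : (brkt t2 t1 / brkt t3 t1).re = 0)
    (hb : (brkt t3 t2 / brkt t3 t1).re = 0) :
    (t1 / t2).re = 0 ∧ (t2 / t3).re = 0 :=
  generic_triple_imaginary_general t1 t2 t3 h1 h2 h3 h13 h13' ha hb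
end

section
/- For all nonzero complex numbers t1, t2, t3, t4, set z1 := ⟦t2,t1⟧, z2 := ⟦t3,t2⟧, z3 := ⟦t4,t3⟧, z4 := ⟦t4,t1⟧, x := ⟦t3,t1⟧, y := ⟦t4,t2⟧. Then x·y = z1·z3 + z2·z4, x²·(z1·z2 + z3·z4) = (z1·z3 + z2·z4)·(z1·z4 + z2·z3), and y²·(z1·z4 + z2·z3) = (z1·z3 + z2·z4)·(z1·z2 + z3·z4). -/
theorem sq_mul_eq_of_mul_eq {M : Type*} [CommMonoid M] {x y s p q : M} (hs : x * y = s)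
    (h : x * p = y * q) : x ^ 2 * p = s * q := by
  calc x ^ 2 * p = x * (x * p) := by rw [sq, mul_assoc]
    _ = x * y * q := by rw [h, mul_assoc]
    _ = s * q := by rw [hs]

section Brackets

variable {t1 t2 t3 t4 : ℂ}

theorem brkt_ptolemy (h1 : t1 ≠ 0) (h2 : t2 ≠ 0) (h3 : t3 ≠ 0) (h4 : t4 ≠ 0) :
    brkt t3 t1 * brkt t4 t2 = brkt t2 t1 * brkt t4 t3 + brkt t3 t2 * brkt t4 t1 := by
  simp only [brkt]
  field_simp
  ring

theorem brkt_balance (h1 : t1 ≠ 0) (h2 : t2 ≠ 0) (h3 : t3 ≠ 0) (h4 : t4 ≠ 0) :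
    brkt t3 t1 * (brkt t2 t1 * brkt t3 t2 + brkt t4 t3 * brkt t4 t1) =
      brkt t4 t2 * (brkt t2 t1 * brkt t4 t1 + brkt t3 t2 * brkt t4 t3) := by
  simp only [brkt]
  field_simp
  ring

end Brackets

/-- The relations among the six quantities `⟦t_q,t_p⟧` (1 ≤ p < q ≤ 4) used in the
proof of the quadrilateral lemma: with `z1 = ⟦t2,t1⟧`, `z2 = ⟦t3,t2⟧`,
`z3 = ⟦t4,t3⟧`, `z4 = ⟦t4,t1⟧`, `x = ⟦t3,t1⟧`, `y = ⟦t4,t2⟧`, one has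
`x·y = z1·z3 + z2·z4`, `x²·(z1·z2 + z3·z4) = (z1·z3 + z2·z4)·(z1·z4 + z2·z3)` and
`y²·(z1·z4 + z2·z3) = (z1·z3 + z2·z4)·(z1·z2 + z3·z4)`. -/
theorem bracket_quad_relations (t1 t2 t3 t4 : ℂ)
    (h1 : t1 ≠ 0) (h2 : t2 ≠ 0) (h3 : t3 ≠ 0) (h4 : t4 ≠ 0) :
    brkt t3 t1 * brkt t4 t2 = brkt t2 t1 * brkt t4 t3 + brkt t3 t2 * brkt t4 t1 ∧
    (brkt t3 t1) ^ 2 * (brkt t2 t1 * brkt t3 t2 + brkt t4 t3 * brkt t4 t1) =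
      (brkt t2 t1 * brkt t4 t3 + brkt t3 t2 * brkt t4 t1) *
        (brkt t2 t1 * brkt t4 t1 + brkt t3 t2 * brkt t4 t3) ∧
    (brkt t4 t2) ^ 2 * (brkt t2 t1 * brkt t4 t1 + brkt t3 t2 * brkt t4 t3) =
      (brkt t2 t1 * brkt t4 t3 + brkt t3 t2 * brkt t4 t1) *
        (brkt t2 t1 * brkt t3 t2 + brkt t4 t3 * brkt t4 t1) := by
  have ptolemy := brkt_ptolemy h1 h2 h3 h4
  have balance := brkt_balance h1 h2 h3 h4
  exact ⟨ptolemy, sq_mul_eq_of_mul_eq ptolemy balance,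
    sq_mul_eq_of_mul_eq ((mul_comm _ _).trans ptolemy) balance.symm⟩
end

section
/- Let m be a positive integer and let a_1, …, a_m be positive real numbers such that a_p < Σ_{q ≠ p} a_q for every p ∈ [m] (strict polygon inequality). Then there exists a unique tuple (θ_1, …, θ_m) of real numbers with 0 = θ_1 < θ_2 < … < θ_m < π such that, setting θ_{m+1} := π, one has sin(θ_{p+1} − θ_p)·a_q = sin(θ_{q+1} − θ_q)·a_p for all p, q ∈ [m]. (Knowing the ratios of side lengths of a convex polygon inscribed in a circle determines its angles.) -/
/-!
Put `Δ_p = θ_{p+1} - θ_p`. The conditions say that the `Δ_p` are positive, sum to `π`, and satisfy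
`sin Δ_p = r_p sin Δ_M` with `r_p = a_p / a_M ≤ 1` for a longest side `a_M`. Because a third
angle is positive, `Δ_p + Δ_M < π`, so `Δ_p ≥ π / 2` would force `sin Δ_M < sin Δ_p`; hence
`Δ_p = arcsin (r_p sin Δ_M)` for `p ≠ M`, and everything reduces to the scalar equation
`v + K v = π` on `(0, π)`, where `K v = ∑_{p ≠ M} arcsin (r_p sin v)`.

`K` is symmetric about `π / 2`, and on `[0, π / 2]` it is increasing and concave with
`K'(0) = ∑_{p ≠ M} r_p > 1` by the polygon inequality. So `v + K v` is strictly increasing on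
`(0, π / 2]`, while an obtuse solution `v = π - u` is a zero of the convex function `u - K u`,
which is negative near `0`: it has at most one such zero and is positive beyond it, which also
rules out an acute solution coexisting with an obtuse one. Existence follows from the
intermediate value theorem on the appropriate branch.
-/

open Real Set Filter Topology

lemma hasDerivAt_arcsin_mul_sin {r u : ℝ} (hr0 : 0 ≤ r) (hr1 : r ≤ 1) (hu : u ∈ Ioo 0 (π / 2)) :
    HasDerivAt (fun u => arcsin (r * sin u)) (r / √(1 + (1 - r ^ 2) * tan u ^ 2)) u := by
  have hcos : 0 < cos u := cos_pos_of_mem_Ioo ⟨by linarith [hu.1, pi_pos], hu.2⟩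
  have hsin : sin u < 1 := by
    rw [← sin_pi_div_two]
    exact strictMonoOn_sin ⟨by linarith [hu.1, pi_pos], hu.2.le⟩ ⟨by linarith [pi_pos], le_rfl⟩ hu.2
  have hsin0 : 0 < sin u := sin_pos_of_pos_of_lt_pi hu.1 (by linarith [hu.2, pi_pos])
  have hrs : r * sin u < 1 := by nlinarith
  refine ((hasDerivAt_arcsin (by nlinarith) hrs.ne).comp u
    ((hasDerivAt_sin u).const_mul r)).congr_deriv ?_
  have h1 : 1 + (1 - r ^ 2) * tan u ^ 2 = (1 - (r * sin u) ^ 2) / cos u ^ 2 := by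
    rw [tan_eq_sin_div_cos]
    field_simp
    nlinarith [sin_sq_add_cos_sq u]
  rw [h1, sqrt_div' _ (sq_nonneg _), sqrt_sq hcos.le]
  field_simp

lemma concaveOn_arcsin_mul_sin {r : ℝ} (hr0 : 0 ≤ r) (hr1 : r ≤ 1) :
    ConcaveOn ℝ (Icc 0 (π / 2)) fun u => arcsin (r * sin u) := by
  refine AntitoneOn.concaveOn_of_deriv (convex_Icc _ _) (by fun_prop) ?_ ?_ <;> rw [interior_Icc]
  · exact fun u hu => (hasDerivAt_arcsin_mul_sin hr0 hr1 hu).differentiableAt.differentiableWithinAt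
  · intro x hx y hy hxy
    have htan : tan x ≤ tan y := strictMonoOn_tan.monotoneOn
      ⟨by linarith [hx.1, pi_pos], hx.2⟩ ⟨by linarith [hy.1, pi_pos], hy.2⟩ hxy
    have htan0 : 0 ≤ tan x := (tan_pos_of_pos_of_lt_pi_div_two hx.1 hx.2).le
    have hr : 0 ≤ 1 - r ^ 2 := by nlinarith
    rw [(hasDerivAt_arcsin_mul_sin hr0 hr1 hx).deriv, (hasDerivAt_arcsin_mul_sin hr0 hr1 hy).deriv]
    gcongr

lemma exists_lt_mul_sin {ρ b : ℝ} (hρ : 1 < ρ) (hb : 0 < b) : ∃ w ∈ Ioo 0 b, w < ρ * sin w := by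
  have hsinc : ∀ᶠ w in 𝓝 0, ρ⁻¹ < sinc w :=
    continuousAt_const.eventually_lt continuous_sinc.continuousAt
      (by rw [sinc_zero]; exact inv_lt_one_of_one_lt₀ hρ)
  obtain ⟨w, hw, hwb⟩ := ((hsinc.filter_mono nhdsWithin_le_nhds).and (Ioo_mem_nhdsGT hb)).exists
  refine ⟨w, hwb, ?_⟩
  rw [sinc_of_ne_zero hwb.1.ne', lt_div_iff₀ hwb.1, inv_mul_eq_div, div_lt_iff₀ (by linarith)] at hw
  linarith

lemma ConvexOn.pos_of_eq_zero {f : ℝ → ℝ} {b w x y : ℝ} (hf : ConvexOn ℝ (Icc 0 b) f)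
    (hf0 : f 0 = 0) (hw : w ∈ Ioc 0 b) (hfw : f w < 0) (hx : 0 < x) (hxy : x < y) (hy : y ≤ b)
    (hfx : f x = 0) : 0 < f y := by
  have hwx : w < x := by
    by_contra! hxw
    have := hf.le_right_of_left_le'' ⟨le_rfl, hw.1.le.trans hw.2⟩ ⟨hw.1.le, hw.2⟩ hx hxw
      (by rw [hf0, hfx])
    linarith
  have := hf.lt_right_of_left_lt ⟨hw.1.le, hw.2⟩ ⟨by linarith, hy⟩
    (Ioo_subset_openSegment ⟨hwx, hxy⟩) (by rwa [hfx])
  rwa [hfx] at this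

lemma le_arcsin_self {y : ℝ} (hy0 : 0 ≤ y) (hy1 : y ≤ 1) : y ≤ arcsin y := by
  simpa [sin_arcsin (by linarith) hy1] using sin_le (arcsin_nonneg.2 hy0)

noncomputable def arcsinSinSum {ι : Type*} (s : Finset ι) (r : ι → ℝ) (u : ℝ) : ℝ :=
  ∑ i ∈ s, arcsin (r i * sin u)

section ArcsinSinSum

variable {ι : Type*} {s : Finset ι} {r : ι → ℝ}

@[fun_prop]
lemma continuous_arcsinSinSum : Continuous (arcsinSinSum s r) := by
  unfold arcsinSinSum; fun_prop

@[simp]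
lemma arcsinSinSum_zero : arcsinSinSum s r 0 = 0 := by simp [arcsinSinSum]

lemma arcsinSinSum_pi_sub (u : ℝ) : arcsinSinSum s r (π - u) = arcsinSinSum s r u := by
  simp [arcsinSinSum]

lemma monotoneOn_arcsinSinSum (hr : ∀ i ∈ s, 0 ≤ r i) :
    MonotoneOn (arcsinSinSum s r) (Icc 0 (π / 2)) := by
  intro x hx y hy hxy
  refine Finset.sum_le_sum fun i hi => monotone_arcsin (mul_le_mul_of_nonneg_left ?_ (hr i hi))
  exact strictMonoOn_sin.monotoneOn ⟨by linarith [hx.1, pi_pos], hx.2⟩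
    ⟨by linarith [hy.1, pi_pos], hy.2⟩ hxy

lemma concaveOn_arcsinSinSum (hr : ∀ i ∈ s, r i ∈ Icc 0 1) :
    ConcaveOn ℝ (Icc 0 (π / 2)) (arcsinSinSum s r) := by
  classical
  unfold arcsinSinSum
  induction s using Finset.induction_on with
  | empty => simpa using concaveOn_const (0 : ℝ) (convex_Icc _ _)
  | insert i s hi ih =>
    simp only [Finset.sum_insert hi]
    obtain ⟨hr0, hr1⟩ := hr i (Finset.mem_insert_self i s)
    exact (concaveOn_arcsin_mul_sin hr0 hr1).add (ih fun j hj => hr j (Finset.mem_insert_of_mem hj))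

lemma sum_mul_sin_le_arcsinSinSum (hr : ∀ i ∈ s, r i ∈ Icc 0 1) {u : ℝ} (hu : u ∈ Icc 0 π) :
    (∑ i ∈ s, r i) * sin u ≤ arcsinSinSum s r u := by
  rw [Finset.sum_mul]
  refine Finset.sum_le_sum fun i hi => le_arcsin_self ?_ ?_
  · exact mul_nonneg (hr i hi).1 (sin_nonneg_of_nonneg_of_le_pi hu.1 hu.2)
  · exact mul_le_one₀ (hr i hi).2 (sin_nonneg_of_nonneg_of_le_pi hu.1 hu.2) (sin_le_one u)


lemma exists_lt_arcsinSinSum (hr : ∀ i ∈ s, r i ∈ Icc 0 1) (hρ : 1 < ∑ i ∈ s, r i) :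
    ∃ w ∈ Ioo 0 (π / 2), w < arcsinSinSum s r w := by
  obtain ⟨w, hw, hlt⟩ := exists_lt_mul_sin hρ (by positivity : 0 < π / 2)
  exact ⟨w, hw, hlt.trans_le (sum_mul_sin_le_arcsinSinSum hr ⟨hw.1.le, by linarith [hw.2, pi_pos]⟩)⟩

lemma arcsinSinSum_lt_of_eq (hr : ∀ i ∈ s, r i ∈ Icc 0 1) (hρ : 1 < ∑ i ∈ s, r i) {x y : ℝ}
    (hx : 0 < x) (hxy : x < y) (hy : y ≤ π / 2) (hKx : arcsinSinSum s r x = x) :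
    arcsinSinSum s r y < y := by
  obtain ⟨w, hw, hwK⟩ := exists_lt_arcsinSinSum hr hρ
  have hconv : ConvexOn ℝ (Icc 0 (π / 2)) fun u => u - arcsinSinSum s r u :=
    (convexOn_id (convex_Icc _ _)).sub (concaveOn_arcsinSinSum hr)
  exact sub_pos.1 <| hconv.pos_of_eq_zero (by simp) ⟨hw.1, hw.2.le⟩ (by simpa using hwK) hx hxy hy
    (by simp [hKx])

theorem existsUnique_add_arcsinSinSum_eq_pi (hr : ∀ i ∈ s, r i ∈ Icc 0 1)
    (hρ : 1 < ∑ i ∈ s, r i) : ∃! v, v ∈ Ioo 0 π ∧ v + arcsinSinSum s r v = π := by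
  set K := arcsinSinSum s r
  have hπ := pi_pos
  have hsymm : ∀ u, K (π - u) = K u := arcsinSinSum_pi_sub
  have hmono : MonotoneOn K (Icc 0 (π / 2)) := monotoneOn_arcsinSinSum fun i hi => (hr i hi).1
  refine existsUnique_of_exists_of_unique ?_ ?_
  · by_cases hacute : π ≤ π / 2 + K (π / 2)
    · obtain ⟨v, hv, hvK⟩ := intermediate_value_Icc (by positivity : (0 : ℝ) ≤ π / 2)
        (by fun_prop : ContinuousOn (fun v => v + K v) _) ⟨by simp [K]; positivity, hacute⟩
      refine ⟨v, ⟨hv.1.lt_of_ne ?_, by linarith [hv.2]⟩, hvK⟩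
      rintro rfl
      simp [K] at hvK
      linarith
    · obtain ⟨w, hw, hwK⟩ := exists_lt_arcsinSinSum hr hρ
      obtain ⟨u, hu, huK⟩ := intermediate_value_Icc hw.2.le
        (by fun_prop : ContinuousOn (fun u => u - K u) _) ⟨(sub_neg.2 hwK).le, by linarith⟩
      refine ⟨π - u, ⟨by linarith [hu.2], by linarith [hw.1, hu.1]⟩, ?_⟩
      simp only at huK
      rw [hsymm]
      linarith
  · suffices key : ∀ v₁ v₂, v₁ ∈ Ioo 0 π → v₂ ∈ Ioo 0 π → v₁ < v₂ →
        v₁ + K v₁ = π → v₂ + K v₂ = π → False by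
      intro v₁ v₂ ⟨hv₁, h₁⟩ ⟨hv₂, h₂⟩
      by_contra hne
      rcases lt_or_gt_of_ne hne with hlt | hgt
      exacts [key v₁ v₂ hv₁ hv₂ hlt h₁ h₂, key v₂ v₁ hv₂ hv₁ hgt h₂ h₁]
    intro v₁ v₂ hv₁ hv₂ hlt h₁ h₂
    by_cases hv₂' : v₂ ≤ π / 2
    · linarith [hmono ⟨hv₁.1.le, by linarith⟩ ⟨by linarith [hv₁.1], hv₂'⟩ hlt.le]
    have hK₂ : K (π - v₂) = π - v₂ := by rw [hsymm]; linarith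
    by_cases hv₁' : v₁ ≤ π / 2
    · have := arcsinSinSum_lt_of_eq hr hρ (y := π / 2) (by linarith [hv₂.2]) (by linarith) le_rfl
        hK₂
      linarith [hmono ⟨hv₁.1.le, hv₁'⟩ ⟨by positivity, le_rfl⟩ hv₁']
    · have := arcsinSinSum_lt_of_eq hr hρ (y := π - v₁) (by linarith [hv₂.2]) (by linarith)
        (by linarith) hK₂
      rw [arcsinSinSum_pi_sub] at this
      linarith

end ArcsinSinSum

structure IsHalfCentralAngles {ι : Type*} [Fintype ι] (a Δ : ι → ℝ) : Prop where
  pos : ∀ p, 0 < Δ p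
  sum_eq_pi : ∑ p, Δ p = π
  sin_mul_eq : ∀ p q, sin (Δ p) * a q = sin (Δ q) * a p

section Polygon

open Finset

variable {ι : Type*} [Fintype ι] {a Δ : ι → ℝ} {M : ι}

lemma exists_ne_ne_of_lt_sum_erase [DecidableEq ι] (hpoly : a M < ∑ q ∈ univ.erase M, a q)
    (hM : ∀ q, a q ≤ a M) {p : ι} (hpM : p ≠ M) : ∃ q, q ≠ p ∧ q ≠ M := by
  by_contra! h
  have hsum : ∑ q ∈ univ.erase M, a q = a p :=
    sum_eq_single p (fun q hq hqp => absurd (h q hqp) (ne_of_mem_erase hq))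
      (fun hp => absurd (mem_erase.2 ⟨hpM, mem_univ p⟩) hp)
  linarith [hM p]

namespace IsHalfCentralAngles

variable (h : IsHalfCentralAngles a Δ)
include h

lemma sum_lt_pi {s : Finset ι} {q : ι} (hq : q ∉ s) : ∑ p ∈ s, Δ p < π :=
  h.sum_eq_pi ▸ sum_lt_sum_of_subset (subset_univ s) (mem_univ q) hq (h.pos q)
    fun p _ _ => (h.pos p).le

lemma sin_eq (hM : a M ≠ 0) (p : ι) : sin (Δ p) = a p / a M * sin (Δ M) := by
  rw [div_mul_eq_mul_div, eq_div_iff hM, h.sin_mul_eq p M, mul_comm]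

lemma lt_pi_div_two [DecidableEq ι] (hpoly : a M < ∑ q ∈ univ.erase M, a q) (hM : ∀ q, a q ≤ a M)
    (hMpos : 0 < a M) {p : ι} (hpM : p ≠ M) : Δ p < π / 2 := by
  by_contra! hge
  obtain ⟨q, hqp, hqM⟩ := exists_ne_ne_of_lt_sum_erase hpoly hM hpM
  have hlt : Δ p + Δ M < π := by
    simpa [sum_pair hpM] using h.sum_lt_pi (s := {p, M}) (q := q) (by simp [hqp, hqM])
  have hsin : sin (Δ p) ≤ sin (Δ M) := by
    rw [h.sin_eq hMpos.ne']
    exact mul_le_of_le_one_left (sin_nonneg_of_nonneg_of_le_pi (h.pos M).le (by linarith [h.pos p]))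
      ((div_le_one hMpos).2 (hM p))
  have : sin (Δ M) < sin (π - Δ p) :=
    strictMonoOn_sin ⟨by linarith [h.pos M, pi_pos], by linarith⟩
      ⟨by linarith [h.pos M], by linarith⟩ (by linarith)
  rw [sin_pi_sub] at this
  linarith

lemma eq_arcsin [DecidableEq ι] (hpoly : a M < ∑ q ∈ univ.erase M, a q) (hM : ∀ q, a q ≤ a M)
    (hMpos : 0 < a M) {p : ι} (hpM : p ≠ M) : Δ p = arcsin (a p / a M * sin (Δ M)) := by
  rw [← h.sin_eq hMpos.ne', arcsin_sin (by linarith [h.pos p, pi_pos])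
    (h.lt_pi_div_two hpoly hM hMpos hpM).le]

lemma add_arcsinSinSum [DecidableEq ι] (hpoly : a M < ∑ q ∈ univ.erase M, a q)
    (hM : ∀ q, a q ≤ a M) (hMpos : 0 < a M) :
    Δ M + arcsinSinSum (univ.erase M) (fun p => a p / a M) (Δ M) = π := by
  rw [← h.sum_eq_pi, ← add_sum_erase _ _ (mem_univ M), arcsinSinSum]
  congr 1
  exact sum_congr rfl fun p hp => (h.eq_arcsin hpoly hM hMpos (ne_of_mem_erase hp)).symm

end IsHalfCentralAngles

lemma isHalfCentralAngles_update [DecidableEq ι] (hpos : ∀ p, 0 < a p) (hM : ∀ q, a q ≤ a M)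
    {v : ℝ} (hv : v ∈ Ioo 0 π)
    (hvK : v + arcsinSinSum (univ.erase M) (fun p => a p / a M) v = π) :
    IsHalfCentralAngles a (Function.update (fun p => arcsin (a p / a M * sin v)) M v) := by
  have hsinv : 0 < sin v := sin_pos_of_pos_of_lt_pi hv.1 hv.2
  have hsin : ∀ p, sin (Function.update (fun p => arcsin (a p / a M * sin v)) M v p)
      = a p / a M * sin v := by
    intro p
    rcases eq_or_ne p M with rfl | hpM
    · simp [div_self (hpos p).ne']
    · rw [Function.update_of_ne hpM, sin_arcsin (by nlinarith [div_pos (hpos p) (hpos M)])]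
      exact mul_le_one₀ ((div_le_one (hpos M)).2 (hM p)) hsinv.le (sin_le_one v)
  refine ⟨fun p => ?_, ?_, fun p q => ?_⟩
  · rcases eq_or_ne p M with rfl | hpM
    · simpa using hv.1
    · simpa [Function.update_of_ne hpM] using mul_pos (div_pos (hpos p) (hpos M)) hsinv
  · rw [← add_sum_erase _ _ (mem_univ M), ← hvK, arcsinSinSum, Function.update_self]
    congr 1
    exact sum_congr rfl fun p hp => Function.update_of_ne (ne_of_mem_erase hp) _ _
  · rw [hsin, hsin]
    ring

theorem existsUnique_isHalfCentralAngles [DecidableEq ι] [Nonempty ι] (hpos : ∀ p, 0 < a p)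
    (hpoly : ∀ p, a p < ∑ q ∈ univ.erase p, a q) : ∃! Δ, IsHalfCentralAngles a Δ := by
  obtain ⟨M, -, hM⟩ := exists_max_image univ a univ_nonempty
  replace hM : ∀ q, a q ≤ a M := fun q => hM q (mem_univ q)
  have hMpos := hpos M
  have hr : ∀ p ∈ univ.erase M, a p / a M ∈ Set.Icc 0 1 :=
    fun p _ => ⟨(div_pos (hpos p) hMpos).le, (div_le_one hMpos).2 (hM p)⟩
  have hρ : 1 < ∑ p ∈ univ.erase M, a p / a M := by
    rw [← sum_div, one_lt_div hMpos]
    exact hpoly M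
  obtain ⟨v, ⟨hv, hvK⟩, hv_unique⟩ := existsUnique_add_arcsinSinSum_eq_pi hr hρ
  refine ⟨_, isHalfCentralAngles_update hpos hM hv hvK, fun Δ hΔ => ?_⟩
  obtain ⟨q, hq⟩ := nonempty_of_sum_ne_zero (by linarith : ∑ p ∈ univ.erase M, a p / a M ≠ 0)
  have hΔM_lt : Δ M < π := by
    simpa using hΔ.sum_lt_pi (s := {M}) (q := q) (by simpa using ne_of_mem_erase hq)
  have hΔM : Δ M = v :=
    hv_unique _ ⟨⟨hΔ.pos M, hΔM_lt⟩, hΔ.add_arcsinSinSum (hpoly M) hM hMpos⟩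
  funext p
  rcases eq_or_ne p M with rfl | hpM
  · simpa using hΔM
  · rw [Function.update_of_ne hpM, hΔ.eq_arcsin (hpoly M) hM hMpos hpM, hΔM]

end Polygon

lemma Fin.partialSum_succ_sub_castSucc {G : Type*} [AddCommGroup G] {n : ℕ} {θ : Fin (n + 1) → G}
    (h0 : θ 0 = 0) :
    Fin.partialSum (fun i => θ i.succ - θ i.castSucc) = θ := by
  simpa [h0, neg_add_eq_sub] using Fin.partialSum_left_neg θ

lemma Fin.partialSum_last {M : Type*} [AddCommMonoid M] {n : ℕ} (f : Fin n → M) :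
    Fin.partialSum f (Fin.last n) = ∑ i, f i := by
  simp [Fin.partialSum, List.take_of_length_le, List.sum_ofFn]

lemma isHalfCentralAngles_succ_sub_castSucc_iff {m : ℕ} {a : Fin m → ℝ} {θ : Fin (m + 1) → ℝ}
    (h0 : θ 0 = 0) :
    IsHalfCentralAngles a (fun p => θ p.succ - θ p.castSucc) ↔
      θ (Fin.last m) = π ∧ StrictMono θ ∧ ∀ p q : Fin m,
        sin (θ p.succ - θ p.castSucc) * a q = sin (θ q.succ - θ q.castSucc) * a p := by
  have hsum : ∑ p : Fin m, (θ p.succ - θ p.castSucc) = θ (Fin.last m) := by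
    rw [← Fin.partialSum_last, Fin.partialSum_succ_sub_castSucc h0]
  rw [Fin.strictMono_iff_lt_succ, ← hsum]
  simp only [← sub_pos (b := θ (Fin.castSucc _))]
  exact ⟨fun h => ⟨h.sum_eq_pi, h.pos, h.sin_mul_eq⟩, fun ⟨h1, h2, h3⟩ => ⟨h2, h1, h3⟩⟩

open Finset in
/-- Here `θ : Fin (m + 1) → ℝ` records `(θ_1, …, θ_{m+1})`. -/
theorem inscribed_polygon_unique (m : ℕ) (hm : 1 ≤ m) (a : Fin m → ℝ)
    (hpos : ∀ p, 0 < a p)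
    (hpoly : ∀ p, a p < ∑ q ∈ Finset.univ.erase p, a q) :
    ∃! θ : Fin (m + 1) → ℝ,
      θ 0 = 0 ∧ θ (Fin.last m) = Real.pi ∧ StrictMono θ ∧
      ∀ p q : Fin m,
        Real.sin (θ p.succ - θ p.castSucc) * a q =
          Real.sin (θ q.succ - θ q.castSucc) * a p := by
  have : Nonempty (Fin m) := ⟨⟨0, hm⟩⟩
  obtain ⟨Δ, hΔ, hΔ_unique⟩ := existsUnique_isHalfCentralAngles hpos hpoly
  refine ⟨Fin.partialSum Δ, ⟨Fin.partialSum_zero Δ, ?_⟩, fun θ ⟨h0, hθ⟩ => ?_⟩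
  · rw [← isHalfCentralAngles_succ_sub_castSucc_iff (Fin.partialSum_zero Δ)]
    simpa only [Fin.partialSum_succ, add_sub_cancel_left] using hΔ
  · rw [← Fin.partialSum_succ_sub_castSucc h0,
      hΔ_unique _ ((isHalfCentralAngles_succ_sub_castSucc_iff h0).2 hθ)]
end

section
/- Let k ≥ 1 and n ≥ 1 be integers and let c = (c_{p,r}) be a complex k × n matrix. Define g : ℝ → ℂⁿ by g_r(t) = Σ_{p=1}^{k} c_{p,r}·exp(i(2p − k − 1)t) for r ∈ [n]. Then for any real numbers 0 ≤ s_1 < s_2 < … < s_k < π, the ℂ-linear span of the vectors g(s_1), …, g(s_k) equals the ℂ-linear span of the rows of c; in particular it equals the ℂ-linear span of the whole image {g(t) : t ∈ ℝ}. -/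
/-!
Each `g t` is the combination `∑ p, e_p(t) • c p` of the rows of `c`, with
`e_p(t) = exp(i(2p + 1 - k)t)`, so the whole image of `g` lies in the span of the rows. At the
nodes `s_j` the coefficient matrix is `exp(i(1 - k)s_j) · (exp(2is_j))^p`, a Vandermonde matrix
with its rows rescaled; since `t ↦ exp(2it)` is injective on `[0, π)` its determinant is
nonzero, so the rows of `c` are in turn combinations of the `g (s j)`.
-/

open Complex Matrix Set Submodule

section SpanOfCombinations

variable {ι κ R M : Type*} [Fintype κ]

theorem Submodule.span_range_sum_smul_le [Semiring R] [AddCommMonoid M] [Module R M]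
    (A : ι → κ → R) (v : κ → M) :
    span R (range fun j => ∑ p, A j p • v p) ≤ span R (range v) :=
  span_le.2 <| range_subset_iff.2 fun _ =>
    sum_mem fun p _ => smul_mem _ _ (subset_span (mem_range_self p))

theorem Submodule.span_range_sum_smul_of_isUnit_det [DecidableEq κ] [CommRing R]
    [AddCommMonoid M] [Module R M] {A : Matrix κ κ R} (hA : IsUnit A.det) (v : κ → M) :
    span R (range fun j => ∑ p, A j p • v p) = span R (range v) := by
  refine le_antisymm (span_range_sum_smul_le A v) ?_
  have hv : (fun p => ∑ j, A⁻¹ p j • ∑ q, A j q • v q) = v := by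
    funext p
    simp only [Finset.smul_sum, smul_smul]
    rw [Finset.sum_comm]
    simp only [← Finset.sum_smul, ← mul_apply, nonsing_inv_mul A hA, one_apply, ite_smul,
      one_smul, zero_smul, Finset.sum_ite_eq, Finset.mem_univ, if_true]
  calc span R (range v) = span R (range fun p => ∑ j, A⁻¹ p j • ∑ q, A j q • v q) := by
        rw [hv]
    _ ≤ _ := span_range_sum_smul_le _ _

end SpanOfCombinations

theorem Matrix.det_of_mul_pow_ne_zero {R : Type*} [CommRing R] [IsDomain R] {n : ℕ}
    {u v : Fin n → R} (hu : ∀ j, u j ≠ 0) (hv : Function.Injective v) :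
    (of fun j p : Fin n => u j * v j ^ (p : ℕ)).det ≠ 0 := by
  change (of fun j p => u j * vandermonde v j p).det ≠ 0
  rw [det_mul_column]
  exact mul_ne_zero (Finset.prod_ne_zero_iff.2 fun j _ => hu j) (det_vandermonde_ne_zero_iff.2 hv)

theorem Complex.injOn_exp_two_mul_mul_I :
    InjOn (fun t : ℝ => cexp (2 * t * I)) (Ico 0 Real.pi) := by
  intro s hs t ht hst
  have hdouble : 2 * s = 2 * t :=
    Circle.exp_injOn_Ico (a := 0) (b := 2 * Real.pi) (by simp)
      ⟨by linarith [hs.1], by linarith [hs.2]⟩ ⟨by linarith [ht.1], by linarith [ht.2]⟩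
      (Subtype.ext (by simpa [Circle.coe_exp] using hst))
  linarith

theorem trig_curve_span_general (k n : ℕ)
    (c : Fin k → Fin n → ℂ) (g : ℝ → Fin n → ℂ)
    (hg : ∀ t : ℝ, ∀ r : Fin n,
      g t r = ∑ p : Fin k,
        c p r * Complex.exp (Complex.I * (2 * ((p : ℕ) : ℂ) + 1 - (k : ℂ)) * (t : ℂ)))
    (s : Fin k → ℝ) (hs0 : ∀ j, 0 ≤ s j) (hmono : StrictMono s)
    (hsπ : ∀ j, s j < Real.pi) :
    Submodule.span ℂ (Set.range fun j => g (s j)) = Submodule.span ℂ (Set.range c) ∧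
    Submodule.span ℂ (Set.range fun j => g (s j)) = Submodule.span ℂ (Set.range g) := by
  set e : ℝ → Fin k → ℂ := fun t p => cexp (I * (2 * ((p : ℕ) : ℂ) + 1 - (k : ℂ)) * (t : ℂ))
  have hg_eq : g = fun t => ∑ p, e t p • c p := by
    funext t r
    simp only [hg, Finset.sum_apply, Pi.smul_apply, smul_eq_mul, mul_comm, e]
  have he : ∀ t p, e t p = cexp (I * (1 - k) * t) * cexp (2 * t * I) ^ (p : ℕ) := by
    intro t p
    rw [← exp_nat_mul, ← exp_add]
    exact congrArg cexp (by ring)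
  have hnodes : Function.Injective fun j => cexp (2 * (s j : ℂ) * I) := fun i j hij =>
    hmono.injective (injOn_exp_two_mul_mul_I ⟨hs0 i, hsπ i⟩ ⟨hs0 j, hsπ j⟩ hij)
  have hdet : IsUnit (of fun j p => e (s j) p).det := by
    simp only [he]
    exact isUnit_iff_ne_zero.2 (det_of_mul_pow_ne_zero (fun _ => exp_ne_zero _) hnodes)
  have hnodes_span : span ℂ (range fun j => g (s j)) = span ℂ (range c) := by
    rw [hg_eq]
    exact span_range_sum_smul_of_isUnit_det hdet c
  refine ⟨hnodes_span, le_antisymm (span_mono (range_comp_subset_range s g)) ?_⟩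
  rw [hnodes_span, hg_eq]
  exact span_range_sum_smul_le e c

/-- The Vandermonde-type lemma underlying Propositions 4.4 and 4.5: if
`g_r(t) = Σ_{p=1}^{k} c_{p,r}·exp(i(2p − k − 1)t)`, then for any
`0 ≤ s_1 < s_2 < ⋯ < s_k < π` the span of `g(s_1), …, g(s_k)` equals the span of
the rows of `c`, and in particular equals the span of the whole image of `g`. -/
theorem trig_curve_span (k n : ℕ) (hk : 1 ≤ k) (hn : 1 ≤ n)
    (c : Fin k → Fin n → ℂ) (g : ℝ → Fin n → ℂ)
    (hg : ∀ t : ℝ, ∀ r : Fin n,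
      g t r = ∑ p : Fin k,
        c p r * Complex.exp (Complex.I * (2 * ((p : ℕ) : ℂ) + 1 - (k : ℂ)) * (t : ℂ)))
    (s : Fin k → ℝ) (hs0 : ∀ j, 0 ≤ s j) (hmono : StrictMono s)
    (hsπ : ∀ j, s j < Real.pi) :
    Submodule.span ℂ (Set.range fun j => g (s j)) = Submodule.span ℂ (Set.range c) ∧
    Submodule.span ℂ (Set.range fun j => g (s j)) = Submodule.span ℂ (Set.range g) :=
  trig_curve_span_general k n c g hg s hs0 hmono hsπ
end

section
/- Let f be a (k,n)-bounded affine permutation that is loopless and coloopless. Then there exists r ∈ [n] such that f(r) < f(r+1); consequently r < r + 1 ≤ f(r) < f(r+1) ≤ r + n, i.e. f has a bridge at r. -/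
/-- A `(k,n)`-bounded affine permutation: a bijection `f : ℤ → ℤ` with
`f(j+n) = f(j)+n`, `Σ_{j=1}^{n} (f(j)−j) = kn`, and `j ≤ f(j) ≤ j+n`. -/
def IsBoundedAffinePermutation (k n : ℕ) (f : ℤ → ℤ) : Prop :=
  Function.Bijective f ∧
  (∀ j : ℤ, f (j + n) = f j + n) ∧
  (∑ j ∈ Finset.Icc (1 : ℤ) (n : ℤ), (f j - j)) = (k : ℤ) * n ∧
  ∀ j : ℤ, j ≤ f j ∧ f j ≤ j + n

theorem Int.exists_lt_succ_of_lt {α : Type*} [LinearOrder α] {g : ℤ → α} {a b : ℤ}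
    (hab : a ≤ b) (hg : g a < g b) : ∃ r, a ≤ r ∧ r < b ∧ g r < g (r + 1) := by
  by_contra! hdesc
  have : AntitoneOn g (Set.Icc a b) :=
    antitoneOn_of_succ_le Set.ordConnected_Icc fun r _ hr hr' => by
      rw [Order.succ_eq_add_one] at hr' ⊢
      exact hdesc r hr.1 (by linarith [hr'.2])
  exact (this ⟨le_rfl, hab⟩ ⟨hab, le_rfl⟩ hab).not_gt hg

/-- Section 2.3: every loopless and coloopless bounded affine permutation has a
bridge at some `r ∈ [n]`, i.e. `r < r+1 ≤ f(r) < f(r+1) ≤ r+n`. -/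
theorem exists_bridge (k n : ℕ) (f : ℤ → ℤ)
    (hf : IsBoundedAffinePermutation k n f)
    (hloopless : ∀ j : ℤ, j < f j)
    (hcoloopless : ∀ j : ℤ, f j < j + n) :
    ∃ r : ℤ, 1 ≤ r ∧ r ≤ n ∧ r + 1 ≤ f r ∧ f r < f (r + 1) ∧ f (r + 1) ≤ r + n := by
  have hn : 0 < (n : ℤ) := by linarith [hloopless 0, hcoloopless 0]
  have hperiod : f 1 < f (1 + n) := by linarith [hf.2.1 1]
  obtain ⟨r, h1r, hrn, hascent⟩ := Int.exists_lt_succ_of_lt (by omega) hperiod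
  exact ⟨r, h1r, by omega, hloopless r, hascent, by linarith [hcoloopless (r + 1)]⟩
end

section
/- Let f be a (k,n)-bounded affine permutation and let q ∈ ℤ. Then the set Ĩ_q := {f(p) : p ∈ ℤ, p < q ≤ f(p)} is contained in the interval [q, q+n−1] and has exactly k elements (so its reduction modulo n consists of k distinct residues). Likewise, the set Ĩ'_q := {p ∈ ℤ : p ≤ q < f(p)} has exactly k elements. -/
/-!
On a window `W = [q - n, q)` of `n` consecutive integers the values of `f` lie in `[q - n, q + n)`;
lowering by `n` those that are `≥ q` gives an injective, hence bijective, self-map of `W`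
(injective because `f` commutes with translation by `n`). Comparing sums over `W` yields
`∑_{p ∈ W} (f p - p) = n · #{p ∈ W | q ≤ f p}`, and by periodicity the left side is `kn`.
Hence `#{p | p < q ≤ f p} = k` for every `q`. Now `Ĩ_q` is the image of this set under the
injection `f`, it lies in a window of length `n` on which reduction mod `n` is injective, and
`Ĩ'_q` is the same set for `q + 1`.
-/

open Finset Function

theorem Function.Periodic.sum_Ico_int_eq {M : Type*} [AddCommMonoid M] {h : ℤ → M} {n : ℕ}
    (hh : Periodic h n) (a b : ℤ) :
    ∑ p ∈ Ico a (a + n), h p = ∑ p ∈ Ico b (b + n), h p := by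
  have hrange (a : ℤ) : ∑ p ∈ Ico a (a + n), h p = ∑ i ∈ range n, h (a + i) := by
    simp [Int.Ico_eq_finset_map, sum_map]
  have hstep (a : ℤ) : ∑ i ∈ range n, h (a + 1 + i) = ∑ i ∈ range n, h (a + i) := by
    rcases n with _ | m
    · simp
    · rw [sum_range_succ, sum_range_succ', Nat.cast_zero, add_zero, ← hh a]
      congr 1
      · exact sum_congr rfl fun i _ => by push_cast; ring_nf
      · push_cast; ring_nf
  have hconst (a : ℤ) : ∑ i ∈ range n, h (a + i) = ∑ i ∈ range n, h i := by
    induction a using Int.induction_on with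
    | zero => simp
    | succ a ih => rw [hstep, ih]
    | pred a ih => rw [← ih, ← hstep, sub_add_cancel]
  rw [hrange, hrange, hconst, hconst]

theorem Int.emod_injOn_Ico (a : ℤ) (n : ℕ) : Set.InjOn (· % (n : ℤ)) (Set.Ico a (a + n)) := by
  intro x hx y hy hxy
  have hdvd : (n : ℤ) ∣ y - x := Int.ModEq.dvd hxy
  have := Int.eq_zero_of_abs_lt_dvd hdvd (abs_lt.2 ⟨by grind, by grind⟩)
  omega

section Window

variable {n : ℕ} {f : ℤ → ℤ}

theorem setOf_lt_le_eq_filter_Ico (hbd : ∀ j, f j ≤ j + n) (q : ℤ) :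
    {p | p < q ∧ q ≤ f p} = ↑{p ∈ Ico (q - n) q | q ≤ f p} := by
  ext p
  have := hbd p
  simp only [Set.mem_ofPred_eq, coe_filter, mem_Ico]
  omega

theorem natCast_mul_card_filter_le_eq_sum_sub (hinj : Injective f)
    (hper : ∀ j, f (j + n) = f j + n) (hbd : ∀ j, j ≤ f j ∧ f j ≤ j + n) (q : ℤ) :
    (n : ℤ) * #{p ∈ Ico (q - n) q | q ≤ f p} = ∑ p ∈ Ico (q - n) q, (f p - p) := by
  set W := Ico (q - n) q
  set g : ℤ → ℤ := fun p => if q ≤ f p then f p - n else f p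
  have hmaps : ∀ p ∈ W, g p ∈ W := by
    intro p hp
    have := hbd p
    simp only [W, g, mem_Ico] at hp ⊢
    split_ifs <;> omega
  have hinjOn : Set.InjOn g W := by
    intro x hx y hy hxy
    have hx' := hper (x - n)
    have hy' := hper (y - n)
    simp only [W, g, coe_Ico, Set.mem_Ico, sub_add_cancel] at hx hy hxy hx' hy'
    split_ifs at hxy
    · exact hinj (by omega)
    · have := @hinj (x - n) y (by omega); omega
    · have := @hinj x (y - n) (by omega); omega
    · exact hinj hxy
  have hperm : ∑ p ∈ W, g p = ∑ p ∈ W, p :=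
    sum_nbij g hmaps hinjOn
      (((Set.Finite.injOn_iff_bijOn_of_mapsTo W.finite_toSet hmaps).1 hinjOn).surjOn)
      (fun _ _ => rfl)
  have hsplit : ∀ p, f p - p = (g p - p) + if q ≤ f p then (n : ℤ) else 0 := by
    intro p; simp only [g]; split_ifs <;> ring
  rw [sum_congr rfl (fun p _ => hsplit p), sum_add_distrib, sum_sub_distrib, hperm, sub_self,
    zero_add, sum_ite, sum_const_zero, add_zero, sum_const, nsmul_eq_mul, mul_comm]

end Window

namespace IsBoundedAffinePermutation

variable {k n : ℕ} {f : ℤ → ℤ}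

theorem ncard_setOf_lt_le (hkn : k ≤ n) (hf : IsBoundedAffinePermutation k n f) (q : ℤ) :
    {p | p < q ∧ q ≤ f p}.ncard = k := by
  obtain ⟨⟨hinj, -⟩, hper, hsum, hbd⟩ := hf
  rw [setOf_lt_le_eq_filter_Ico (fun j => (hbd j).2), Set.ncard_coe_finset]
  have hperiodic : Periodic (fun p => f p - p) n := fun p => by simp only [hper]; ring
  have hmul : (n : ℤ) * #{p ∈ Ico (q - n) q | q ≤ f p} = n * k := by
    have hshift := hperiodic.sum_Ico_int_eq (q - n) 1
    rw [sub_add_cancel, add_comm 1, Ico_add_one_right_eq_Icc, hsum] at hshift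
    rw [natCast_mul_card_filter_le_eq_sum_sub hinj hper hbd, hshift, mul_comm]
  rcases n.eq_zero_or_pos with rfl | hn
  · simp_all
  · exact_mod_cast mul_left_cancel₀ (by positivity) hmul

end IsBoundedAffinePermutation

/-- Grassmann necklaces: for a `(k,n)`-bounded affine permutation `f` and any
`q ∈ ℤ`, the set `Ĩ_q = {f(p) : p < q ≤ f(p)}` is contained in `[q, q+n−1]` and
has exactly `k` elements (so its reduction modulo `n` consists of `k` distinct
residues), and the set `Ĩ'_q = {p : p ≤ q < f(p)}` also has exactly `k`
elements. -/
theorem grassmann_necklace_card (k n : ℕ) (hkn : k ≤ n) (f : ℤ → ℤ)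
    (hf : IsBoundedAffinePermutation k n f) (q : ℤ) :
    ({m : ℤ | ∃ p : ℤ, p < q ∧ q ≤ f p ∧ f p = m} ⊆ Set.Icc q (q + n - 1)) ∧
    Set.ncard {m : ℤ | ∃ p : ℤ, p < q ∧ q ≤ f p ∧ f p = m} = k ∧
    Set.ncard ((fun m : ℤ => m % (n : ℤ)) ''
      {m : ℤ | ∃ p : ℤ, p < q ∧ q ≤ f p ∧ f p = m}) = k ∧
    Set.ncard {p : ℤ | p ≤ q ∧ q < f p} = k := by
  have hbd := hf.2.2.2
  have himage : {m : ℤ | ∃ p : ℤ, p < q ∧ q ≤ f p ∧ f p = m} = f '' {p | p < q ∧ q ≤ f p} := by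
    simp only [Set.image, Set.mem_ofPred_eq, and_assoc]
  have hsub : {m : ℤ | ∃ p : ℤ, p < q ∧ q ≤ f p ∧ f p = m} ⊆ Set.Icc q (q + n - 1) := by
    rintro _ ⟨p, hpq, hqf, rfl⟩
    have := (hbd p).2
    exact ⟨hqf, by omega⟩
  have hcard : Set.ncard {m : ℤ | ∃ p : ℤ, p < q ∧ q ≤ f p ∧ f p = m} = k := by
    rw [himage, Set.ncard_image_of_injective _ hf.1.1, hf.ncard_setOf_lt_le hkn]
  have hIcc : Set.Icc q (q + n - 1) ⊆ Set.Ico q (q + n) := fun m hm => ⟨hm.1, by grind⟩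
  refine ⟨hsub, hcard, ?_, ?_⟩
  · rw [((Int.emod_injOn_Ico q n).mono (hsub.trans hIcc)).ncard_image, hcard]
  · have hshift : {p : ℤ | p ≤ q ∧ q < f p} = {p | p < q + 1 ∧ q + 1 ≤ f p} := by
      ext p
      simp only [Set.mem_ofPred_eq]
      omega
    rw [hshift, hf.ncard_setOf_lt_le hkn]
end

section
/- Let n ≥ 1 and let σ be a permutation of [n]. Then there exists a unique bijection f : ℤ → ℤ such that f(p+n) = f(p) + n for all p ∈ ℤ, p < f(p) ≤ p + n for all p ∈ ℤ, and f(p) ≡ σ(p) (mod n) for all p ∈ [n]. Moreover, there is an integer k with 1 ≤ k ≤ n such that Σ_{p=1}^{n} (f(p) − p) = kn; thus f is a loopless (k,n)-bounded affine permutation, and this construction gives a bijection between permutations of [n] and loopless bounded affine permutations. -/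
/-!
The three conditions pin `f x` down as the unique element of the window `(x, x + n]` in the
residue class of `σ (residue n x) + 1`, i.e. `toIocMod`; the map so defined is a bijection, with
inverse sending `y` to the unique element of `[y - n, y)` in the class of `σ⁻¹ (residue n y) + 1`.
Modulo `n`, `∑ (f j - j)` over `[n]` is `∑ (σ p - p) = 0`, and each term lies in `[1, n]`, whence
the sum is `k n` with `1 ≤ k ≤ n`. Conversely, a bijection commuting with `x ↦ x + n` satisfies
`g x ≡ g y ↔ x ≡ y`, so it permutes the residue classes.
-/

theorem toIocMod_eq_iff_intModEq {p : ℤ} (hp : 0 < p) {a b c : ℤ} :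
    toIocMod hp a b = c ↔ c ∈ Set.Ioc a (a + p) ∧ c ≡ b [ZMOD p] := by
  rw [toIocMod_eq_iff, ← AddCommGroup.modEq_iff_intModEq, AddCommGroup.modEq_iff_eq_add_zsmul]

theorem toIcoMod_eq_iff_intModEq {p : ℤ} (hp : 0 < p) {a b c : ℤ} :
    toIcoMod hp a b = c ↔ c ∈ Set.Ico a (a + p) ∧ c ≡ b [ZMOD p] := by
  rw [toIcoMod_eq_iff, ← AddCommGroup.modEq_iff_intModEq, AddCommGroup.modEq_iff_eq_add_zsmul]

theorem toIocMod_intModEq {p : ℤ} (hp : 0 < p) (a b : ℤ) : toIocMod hp a b ≡ b [ZMOD p] :=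
  ((toIocMod_eq_iff_intModEq hp).mp rfl).2

theorem toIcoMod_intModEq {p : ℤ} (hp : 0 < p) (a b : ℤ) : toIcoMod hp a b ≡ b [ZMOD p] :=
  ((toIcoMod_eq_iff_intModEq hp).mp rfl).2

theorem sum_Icc_one_eq_sum_fin {M : Type*} [AddCommMonoid M] (n : ℕ) (h : ℤ → M) :
    ∑ j ∈ Finset.Icc (1 : ℤ) n, h j = ∑ p : Fin n, h (p + 1) := by
  rw [Int.Icc_eq_finset_map, Finset.sum_map, Fin.sum_univ_eq_sum_range (fun i => h (i + 1))]
  simp [add_comm]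

theorem map_add_mul_of_map_add {f : ℤ → ℤ} {m : ℤ} (hf : ∀ x, f (x + m) = f x + m) (k x : ℤ) :
    f (x + m * k) = f x + m * k := by
  have hper : Function.Periodic (fun x => f x - x) m := fun x => by simp only [hf]; ring
  have := hper.int_mul k x
  simp only [Int.cast_id, mul_comm k m] at this
  linarith

theorem Int.ModEq.map_of_map_add {f : ℤ → ℤ} {m : ℤ} (hf : ∀ x, f (x + m) = f x + m) {x y : ℤ}
    (h : x ≡ y [ZMOD m]) : f x ≡ f y [ZMOD m] := by
  obtain ⟨k, rfl⟩ := Int.modEq_iff_add_fac.mp h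
  rw [map_add_mul_of_map_add hf]
  exact Int.modEq_add_fac_self.symm

theorem Int.ModEq.of_map_of_map_add {f : ℤ → ℤ} {m : ℤ} (hf : ∀ x, f (x + m) = f x + m)
    (hinj : Function.Injective f) {x y : ℤ} (h : f x ≡ f y [ZMOD m]) : x ≡ y [ZMOD m] := by
  obtain ⟨k, hk⟩ := Int.modEq_iff_add_fac.mp h
  rw [← map_add_mul_of_map_add hf] at hk
  rw [hinj hk]
  exact Int.modEq_add_fac_self.symm

theorem sum_sub_self_modEq_zero {n : ℕ} {σ : Equiv.Perm (Fin n)} {f : ℤ → ℤ}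
    (hcong : ∀ p : Fin n, f (p + 1) ≡ σ p + 1 [ZMOD n]) :
    ∑ p : Fin n, (f (p + 1) - (p + 1)) ≡ 0 [ZMOD n] := by
  refine (Int.ModEq.sum fun p _ => (hcong p).sub_right _).trans ?_
  simp [Finset.sum_sub_distrib, Equiv.sum_comp σ (fun p : Fin n => (p : ℤ))]

namespace AffinePerm

theorem period_pos (n : ℕ) [NeZero n] : (0 : ℤ) < n := Int.natCast_pos.mpr (NeZero.pos n)

variable {n : ℕ} [NeZero n]

variable (n) in
/-- The `p : Fin n` with `x ≡ p + 1 [ZMOD n]`; `Fin n` stands for `[n]` via `p ↦ p + 1`. -/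
def residue (x : ℤ) : Fin n :=
  ⟨((x - 1) % n).toNat, by
    have hn := period_pos n
    have := Int.emod_lt_of_pos (x - 1) hn
    omega⟩

theorem coe_residue (x : ℤ) : (residue n x : ℤ) = (x - 1) % n :=
  Int.toNat_of_nonneg (Int.emod_nonneg _ (period_pos n).ne')

theorem residue_eq_iff {x : ℤ} {p : Fin n} : residue n x = p ↔ x ≡ p + 1 [ZMOD n] := by
  rw [Fin.ext_iff, ← Int.natCast_inj, coe_residue]
  constructor
  · intro h
    simpa [h] using ((Int.mod_modEq (x - 1) n).add_right 1).symm
  · intro h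
    have h' : x - 1 ≡ p [ZMOD n] := by simpa using h.sub_right 1
    rw [h'.eq]
    exact Int.emod_eq_of_lt (by positivity) (by exact_mod_cast p.isLt)

theorem modEq_residue_add_one (x : ℤ) : x ≡ residue n x + 1 [ZMOD n] :=
  residue_eq_iff.mp rfl

theorem residue_coe_add_one (p : Fin n) : residue n (p + 1) = p :=
  residue_eq_iff.mpr rfl

theorem residue_eq_residue_iff {x y : ℤ} : residue n x = residue n y ↔ x ≡ y [ZMOD n] := by
  rw [residue_eq_iff]
  exact ⟨fun h => h.trans (modEq_residue_add_one y).symm,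
    fun h => h.trans (modEq_residue_add_one y)⟩

theorem residue_add_self (x : ℤ) : residue n (x + n) = residue n x :=
  residue_eq_residue_iff.mpr Int.add_modEq_right

noncomputable def ofPerm (σ : Equiv.Perm (Fin n)) : ℤ ≃ ℤ where
  toFun x := toIocMod (period_pos n) x (σ (residue n x) + 1)
  invFun y := toIcoMod (period_pos n) (y - n) (σ.symm (residue n y) + 1)
  left_inv x := by
    have hres : residue n (toIocMod (period_pos n) x (σ (residue n x) + 1)) = σ (residue n x) :=
      residue_eq_iff.mpr (toIocMod_intModEq _ _ _)
    obtain ⟨hlo, hhi⟩ := toIocMod_mem_Ioc (period_pos n) x (σ (residue n x) + 1)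
    change toIcoMod _ _ _ = x
    rw [hres, σ.symm_apply_apply, toIcoMod_eq_iff_intModEq]
    exact ⟨⟨by linarith, by linarith⟩, modEq_residue_add_one x⟩
  right_inv y := by
    have hres : residue n (toIcoMod (period_pos n) (y - n) (σ.symm (residue n y) + 1)) =
        σ.symm (residue n y) :=
      residue_eq_iff.mpr (toIcoMod_intModEq _ _ _)
    obtain ⟨hlo, hhi⟩ := toIcoMod_mem_Ico (period_pos n) (y - n) (σ.symm (residue n y) + 1)
    change toIocMod _ _ _ = y
    rw [hres, σ.apply_symm_apply, toIocMod_eq_iff_intModEq]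
    exact ⟨⟨by linarith, by linarith⟩, modEq_residue_add_one y⟩

theorem ofPerm_apply_eq_iff {σ : Equiv.Perm (Fin n)} {x y : ℤ} :
    ofPerm σ x = y ↔ y ∈ Set.Ioc x (x + n) ∧ y ≡ σ (residue n x) + 1 [ZMOD n] :=
  toIocMod_eq_iff_intModEq (period_pos n) (a := x)

theorem ofPerm_mem_Ioc (σ : Equiv.Perm (Fin n)) (x : ℤ) : ofPerm σ x ∈ Set.Ioc x (x + n) :=
  (ofPerm_apply_eq_iff.mp rfl).1

theorem ofPerm_add_self (σ : Equiv.Perm (Fin n)) (x : ℤ) : ofPerm σ (x + n) = ofPerm σ x + n := by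
  change toIocMod _ _ _ = toIocMod _ _ _ + _
  rw [residue_add_self, toIocMod_add_right']

theorem ofPerm_coe_add_one_modEq (σ : Equiv.Perm (Fin n)) (p : Fin n) :
    ofPerm σ (p + 1) ≡ σ p + 1 [ZMOD n] := by
  simpa only [residue_coe_add_one] using (ofPerm_apply_eq_iff (σ := σ) (x := p + 1)).mp rfl |>.2

theorem eq_ofPerm {σ : Equiv.Perm (Fin n)} {f : ℤ → ℤ} (hper : ∀ x, f (x + n) = f x + n)
    (hbnd : ∀ x, x < f x ∧ f x ≤ x + n) (hcong : ∀ p : Fin n, f (p + 1) ≡ σ p + 1 [ZMOD n])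
    (x : ℤ) : ofPerm σ x = f x :=
  ofPerm_apply_eq_iff.mpr
    ⟨hbnd x, ((modEq_residue_add_one x).map_of_map_add hper).trans (hcong _)⟩

theorem exists_eq_mul_of_dvd_of_le {S : ℤ} (hdvd : (n : ℤ) ∣ S) (hlo : n ≤ S) (hhi : S ≤ n * n) :
    ∃ k : ℕ, 1 ≤ k ∧ k ≤ n ∧ S = k * n := by
  obtain ⟨d, rfl⟩ := hdvd
  have hn := period_pos n
  have hd : 1 ≤ d := le_of_mul_le_mul_left (by linarith) hn
  have hdn : d ≤ n := le_of_mul_le_mul_left hhi hn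
  exact ⟨d.toNat, by omega, by omega, by rw [Int.toNat_of_nonneg (by omega), mul_comm]⟩

theorem exists_sum_Icc_sub_self_eq_mul {σ : Equiv.Perm (Fin n)} {f : ℤ → ℤ}
    (hbnd : ∀ x, x < f x ∧ f x ≤ x + n) (hcong : ∀ p : Fin n, f (p + 1) ≡ σ p + 1 [ZMOD n]) :
    ∃ k : ℕ, 1 ≤ k ∧ k ≤ n ∧ ∑ j ∈ Finset.Icc (1 : ℤ) n, (f j - j) = k * n := by
  rw [sum_Icc_one_eq_sum_fin]
  refine exists_eq_mul_of_dvd_of_le ?_ ?_ ?_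
  · exact Int.modEq_zero_iff_dvd.mp (sum_sub_self_modEq_zero hcong)
  · simpa using Finset.card_nsmul_le_sum Finset.univ (fun p : Fin n => f (p + 1) - (p + 1)) 1
      fun p _ => by linarith [hbnd (p + 1)]
  · simpa using Finset.sum_le_card_nsmul Finset.univ (fun p : Fin n => f (p + 1) - (p + 1)) n
      fun p _ => by linarith [hbnd (p + 1)]

noncomputable def residuePerm (g : ℤ ≃ ℤ) (hg : ∀ x, g (x + n) = g x + n) :
    Equiv.Perm (Fin n) :=
  Equiv.ofBijective (fun p : Fin n => residue n (g (p + 1))) <|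
    Finite.injective_iff_bijective.mp fun a b h => by
      simpa only [residue_coe_add_one] using residue_eq_residue_iff.mpr
        ((residue_eq_residue_iff.mp h).of_map_of_map_add hg g.injective)

theorem modEq_residuePerm (g : ℤ ≃ ℤ) (hg : ∀ x, g (x + n) = g x + n) (p : Fin n) :
    g (p + 1) ≡ residuePerm g hg p + 1 [ZMOD n] :=
  modEq_residue_add_one _

end AffinePerm

open AffinePerm

/-- Remark 1.1 / Section 2.1: for every permutation `σ` of `[n]` there is a unique
bijection `f : ℤ → ℤ` with `f(p+n) = f(p)+n`, `p < f(p) ≤ p+n`, and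
`f(p) ≡ σ(p) (mod n)` for `p ∈ [n]`; moreover this `f` satisfies
`Σ_{p=1}^{n} (f(p)−p) = kn` for some `1 ≤ k ≤ n`, so it is a loopless
`(k,n)`-bounded affine permutation, and conversely every loopless bounded affine
permutation arises this way (so the construction is a bijection).  Here `[n]` is
identified with `Fin n` via `p ↦ p+1`. -/
theorem perm_loopless_BAP_bijection (n : ℕ) (hn : 1 ≤ n) (σ : Equiv.Perm (Fin n)) :
    (∃! f : ℤ ≃ ℤ,
      (∀ p : ℤ, f (p + n) = f p + n) ∧
      (∀ p : ℤ, p < f p ∧ f p ≤ p + n) ∧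
      (∀ p : Fin n, f ((p : ℤ) + 1) ≡ ((σ p : ℤ) + 1) [ZMOD (n : ℤ)])) ∧
    (∀ f : ℤ ≃ ℤ,
      ((∀ p : ℤ, f (p + n) = f p + n) ∧
       (∀ p : ℤ, p < f p ∧ f p ≤ p + n) ∧
       (∀ p : Fin n, f ((p : ℤ) + 1) ≡ ((σ p : ℤ) + 1) [ZMOD (n : ℤ)])) →
      ∃ k : ℕ, 1 ≤ k ∧ k ≤ n ∧
        (∑ j ∈ Finset.Icc (1 : ℤ) (n : ℤ), (f j - j)) = (k : ℤ) * n) ∧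
    (∀ g : ℤ ≃ ℤ,
      (∀ p : ℤ, g (p + n) = g p + n) →
      (∀ p : ℤ, p < g p ∧ g p ≤ p + n) →
      ∃ τ : Equiv.Perm (Fin n),
        ∀ p : Fin n, g ((p : ℤ) + 1) ≡ ((τ p : ℤ) + 1) [ZMOD (n : ℤ)]) := by
  have : NeZero n := ⟨by omega⟩
  refine ⟨⟨ofPerm σ, ⟨ofPerm_add_self σ, ofPerm_mem_Ioc σ, ofPerm_coe_add_one_modEq σ⟩, ?_⟩, ?_, ?_⟩
  · rintro f ⟨hper, hbnd, hcong⟩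
    exact Equiv.ext fun x => (eq_ofPerm hper hbnd hcong x).symm
  · rintro f ⟨-, hbnd, hcong⟩
    exact exists_sum_Icc_sub_self_eq_mul hbnd hcong
  · exact fun g hper _ => ⟨residuePerm g hper, modEq_residuePerm g hper⟩
end

section
/- Let N ≥ 2 be an integer, let ζ := exp(iπ/(2N)) ∈ ℂ, and let z_p := ζ^{2p−N} for p ∈ [N−1]. Then for every q ∈ [N−1], ((−1)^N / N) · Σ_{p=1}^{N−1} z_p^{2q} (1 + z_p²) equals 1 if q = N−1 and equals 0 otherwise. (Equivalently, the last row of the inverse of the (N−1)×(N−1) Vandermonde-type matrix with entries z_p^{2q−1} has p-th entry (−1)^N z_p (1 + z_p²)/N; this is the key computation in the evaluation of the response matrix of the regular 2N-gon, Theorem 6.5.) -/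
/-!
Since `ζ ^ (2N) = -1`, the nodes satisfy `z_p² = -ωᵖ` with `ω = ζ⁴ = exp(2πi/N)` a primitive
`N`-th root of unity, so the `p`-th summand is `(-1)^q ω^{pq} (1 - ωᵖ)`. It vanishes at `p = 0`,
so the sum may be taken over a full period `0 ≤ p < N`, where `Σ_p ω^{pk}` is `0` for `0 < k < N`
and `N` for `k = N`. Only `k = q + 1 = N` survives.
-/

open Finset

namespace IsPrimitiveRoot

variable {R : Type*} [CommRing R] [IsDomain R] {ω : R} {N : ℕ}

theorem sum_range_pow_pow_eq_zero (hω : IsPrimitiveRoot ω N) {k : ℕ} (hk0 : k ≠ 0)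
    (hkN : k < N) : ∑ p ∈ range N, (ω ^ p) ^ k = 0 := by
  have hgeom := mul_geom_sum (ω ^ k) N
  rw [pow_right_comm, hω.pow_eq_one, one_pow, sub_self] at hgeom
  simpa only [pow_right_comm ω _ k] using
    (mul_eq_zero.1 hgeom).resolve_left (sub_ne_zero.2 (hω.pow_ne_one_of_pos_of_lt hk0 hkN))

omit [IsDomain R] in
theorem sum_range_pow_pow_self (hω : IsPrimitiveRoot ω N) :
    ∑ p ∈ range N, (ω ^ p) ^ N = N := by
  simp [pow_right_comm ω _ N, hω.pow_eq_one]

theorem sum_range_pow_mul_one_sub (hω : IsPrimitiveRoot ω N) {q : ℕ} (hq0 : q ≠ 0)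
    (hqN : q < N) :
    ∑ p ∈ range N, (ω ^ p) ^ q * (1 - ω ^ p) = if q + 1 = N then -(N : R) else 0 := by
  simp only [mul_sub, mul_one, ← pow_succ, sum_sub_distrib, hω.sum_range_pow_pow_eq_zero hq0 hqN]
  split_ifs with h
  · rw [h, hω.sum_range_pow_pow_self, zero_sub]
  · rw [hω.sum_range_pow_pow_eq_zero (by omega) (by omega), sub_zero]

end IsPrimitiveRoot

theorem Finset.sum_Icc_one_pred_eq_sum_range {M : Type*} [AddCommMonoid M] {f : ℕ → M}
    (hf : f 0 = 0) (N : ℕ) : ∑ p ∈ Icc 1 (N - 1), f p = ∑ p ∈ range N, f p := by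
  refine sum_subset (fun p hp => ?_) (fun p hp hp' => ?_)
  · simp only [mem_Icc, mem_range] at hp ⊢; omega
  · obtain rfl : p = 0 := by simp only [mem_Icc, mem_range] at hp hp'; omega
    exact hf

theorem zpow_two_mul_sub_sq {K : Type*} [Field K] {ζ : K} {N : ℕ} (hN : N ≠ 0)
    (hζ : ζ ^ (2 * N) = -1) (p : ℕ) : (ζ ^ (2 * (p : ℤ) - N)) ^ 2 = -(ζ ^ 4) ^ p := by
  have hζ0 : ζ ≠ 0 := by rintro rfl; simp [hN] at hζ
  have hexp : (2 * (p : ℤ) - N) * (2 : ℕ) = ((4 * p : ℕ) : ℤ) - ((2 * N : ℕ) : ℤ) := by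
    push_cast; ring
  rw [← zpow_natCast, ← zpow_mul, hexp, zpow_sub₀ hζ0, zpow_natCast, zpow_natCast, hζ, pow_mul]
  ring

namespace Complex

theorem exp_I_mul_pi_div_two_mul_pow (N : ℕ) (hN : N ≠ 0) :
    exp (I * Real.pi / (2 * N)) ^ (2 * N) = -1 := by
  rw [← exp_nat_mul, ← exp_pi_mul_I]
  congr 1
  push_cast
  field_simp

theorem isPrimitiveRoot_exp_I_mul_pi_div_two_mul_pow_four (N : ℕ) (hN : N ≠ 0) :
    IsPrimitiveRoot (exp (I * Real.pi / (2 * N)) ^ 4) N := by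
  convert isPrimitiveRoot_exp N hN using 1
  rw [← exp_nat_mul]
  congr 1
  push_cast
  field_simp
  ring

end Complex

theorem vandermonde_inverse_last_row_general (N : ℕ) (q : ℕ)
    (hq1 : 1 ≤ q) (hq2 : q ≤ N - 1) :
    ((-1 : ℂ) ^ N / (N : ℂ)) *
      ∑ p ∈ Finset.Icc 1 (N - 1),
        ((Complex.exp (Complex.I * (Real.pi : ℂ) / (2 * (N : ℂ))) ^ (2 * (p : ℤ) - (N : ℤ))) ^ (2 * q) *
          (1 + (Complex.exp (Complex.I * (Real.pi : ℂ) / (2 * (N : ℂ))) ^ (2 * (p : ℤ) - (N : ℤ))) ^ 2)) =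
      if q = N - 1 then 1 else 0 := by
  set ζ := Complex.exp (Complex.I * (Real.pi : ℂ) / (2 * (N : ℂ)))
  have hN0 : N ≠ 0 := by omega
  have hω := Complex.isPrimitiveRoot_exp_I_mul_pi_div_two_mul_pow_four N hN0
  have hsummand : ∀ p : ℕ, (ζ ^ (2 * (p : ℤ) - N)) ^ (2 * q) * (1 + (ζ ^ (2 * (p : ℤ) - N)) ^ 2)
      = (-1) ^ q * (((ζ ^ 4) ^ p) ^ q * (1 - (ζ ^ 4) ^ p)) := by
    intro p
    rw [pow_mul, zpow_two_mul_sub_sq hN0 (Complex.exp_I_mul_pi_div_two_mul_pow N hN0)]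
    ring
  rw [sum_congr rfl fun p _ => hsummand p, ← mul_sum, sum_Icc_one_pred_eq_sum_range (by simp) N,
    hω.sum_range_pow_mul_one_sub (by omega) (by omega)]
  split_ifs with hlast hq hq
  · obtain rfl : N = q + 1 := hlast.symm
    push_cast
    field_simp
    rw [← pow_add, Odd.neg_one_pow ⟨q, by ring⟩, neg_neg]
  · omega
  · omega
  · simp

/-- The key computation in the evaluation of the response matrix of the regular
`2N`-gon (Theorem 6.5): with `ζ = exp(iπ/(2N))` and `z_p = ζ^{2p−N}` for
`p ∈ [N−1]`, for every `q ∈ [N−1]` one has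
`((−1)^N / N) · Σ_{p=1}^{N−1} z_p^{2q} (1 + z_p²) = δ_{q, N−1}`. -/
theorem vandermonde_inverse_last_row (N : ℕ) (hN : 2 ≤ N) (q : ℕ)
    (hq1 : 1 ≤ q) (hq2 : q ≤ N - 1) :
    ((-1 : ℂ) ^ N / (N : ℂ)) *
      ∑ p ∈ Finset.Icc 1 (N - 1),
        ((Complex.exp (Complex.I * (Real.pi : ℂ) / (2 * (N : ℂ))) ^ (2 * (p : ℤ) - (N : ℤ))) ^ (2 * q) *
          (1 + (Complex.exp (Complex.I * (Real.pi : ℂ) / (2 * (N : ℂ))) ^ (2 * (p : ℤ) - (N : ℤ))) ^ 2)) =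
      if q = N - 1 then 1 else 0 :=
  vandermonde_inverse_last_row_general N q hq1 hq2
end

section
/- Let 1 ≤ k ≤ n and set θ̃_p := pπ/n for all p ∈ ℤ (the regular tuple). Define γ : ℝ → ℝⁿ by γ_r(t) = Π_{j=1}^{k−1} sin(t − (r+j)π/n) for r ∈ [n], and let S : ℝⁿ → ℝⁿ be the twisted cyclic shift S(x_1, …, x_n) = (x_2, …, x_n, (−1)^{k−1} x_1). Then S(γ(t)) = γ(t − π/n) for every t ∈ ℝ; consequently S maps the ℝ-linear span of {γ(t) : t ∈ ℝ} onto itself. (This is the cyclic-symmetry computation showing that the boundary measurement of the regular tuple is the unique cyclically symmetric point of Gr_{≥0}(k,n), Proposition 6.6.) -/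
/-!
Write `γ(t)_r = c(t, r + 1)` with `c(t, x) = ∏_{j=1}^{k-1} sin(t - (x + j)π/n)` for real `x`.
Delaying `t` by `π/n` advances `x` by one, and advancing `x` by `n` shifts every factor by `π`,
which multiplies `c` by `(-1)^{k-1}`: this sign is exactly the twist of `S` at the last
coordinate. Since `S` is linear and `t ↦ t - π/n` is onto, `S` permutes the curve, hence fixes
its span.
-/

open Real

noncomputable section

/-- The `x`-th coordinate of the top-cell curve of the regular tuple, for a real index `x`. -/
def regularCurve (k n : ℕ) (t x : ℝ) : ℝ :=
  ∏ j ∈ Finset.Icc 1 (k - 1), sin (t - (x + j) * π / n)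

theorem regularCurve_sub_pi_div (k n : ℕ) (t x : ℝ) :
    regularCurve k n (t - π / n) x = regularCurve k n t (x + 1) := by
  unfold regularCurve
  congr 1 with j
  ring_nf

theorem regularCurve_add_natCast {n : ℕ} (hn : n ≠ 0) (k : ℕ) (t x : ℝ) :
    regularCurve k n t (x + n) = (-1) ^ (k - 1) * regularCurve k n t x := by
  have hn' : (n : ℝ) ≠ 0 := Nat.cast_ne_zero.mpr hn
  have sin_shift (j : ℕ) : sin (t - (x + n + j) * π / n) = -sin (t - (x + j) * π / n) := by
    rw [← sin_sub_pi]
    congr 1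
    field_simp
    ring
  simp only [regularCurve, sin_shift, Finset.prod_neg, Nat.card_Icc, Nat.add_sub_cancel]

def twistedShift {n : ℕ} (hn : 0 < n) (ε : ℝ) : (Fin n → ℝ) →ₗ[ℝ] Fin n → ℝ :=
  LinearMap.pi fun r =>
    if h : (r : ℕ) + 1 < n then LinearMap.proj ⟨r + 1, h⟩ else ε • LinearMap.proj ⟨0, hn⟩

theorem twistedShift_apply {n : ℕ} (hn : 0 < n) (ε : ℝ) (x : Fin n → ℝ) (r : Fin n) :
    twistedShift hn ε x r = if h : (r : ℕ) + 1 < n then x ⟨r + 1, h⟩ else ε * x ⟨0, hn⟩ := by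
  rw [twistedShift, LinearMap.pi_apply]
  split_ifs <;> rfl

theorem LinearMap.image_span_range_eq_of_map_eq_comp {R M ι : Type*} [Semiring R]
    [AddCommMonoid M] [Module R M] (f : M →ₗ[R] M) {γ : ι → M} {g : ι → ι}
    (hg : Function.Surjective g) (h : ∀ i, f (γ i) = γ (g i)) :
    f '' Submodule.span R (Set.range γ) = Submodule.span R (Set.range γ) := by
  rw [← Submodule.map_coe, Submodule.map_span, ← Set.range_comp,
    show f ∘ γ = γ ∘ g from funext h, hg.range_comp]

end

theorem regular_tuple_cyclic_symmetry_general (k n : ℕ)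
    (hn : 0 < n)
    (γ : ℝ → Fin n → ℝ)
    (hγ : ∀ t : ℝ, ∀ r : Fin n,
      γ t r = ∏ j ∈ Finset.Icc 1 (k - 1),
        Real.sin (t - (((r : ℕ) : ℝ) + 1 + (j : ℝ)) * Real.pi / n))
    (S : (Fin n → ℝ) → Fin n → ℝ)
    (hS : ∀ x : Fin n → ℝ, ∀ r : Fin n,
      S x r = if h : (r : ℕ) + 1 < n then x ⟨(r : ℕ) + 1, h⟩
              else (-1 : ℝ) ^ (k - 1) * x ⟨0, hn⟩) :
    (∀ t : ℝ, S (γ t) = γ (t - Real.pi / n)) ∧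
    S '' (Submodule.span ℝ (Set.range γ) : Set (Fin n → ℝ)) =
      (Submodule.span ℝ (Set.range γ) : Set (Fin n → ℝ)) := by
  have hγc (t : ℝ) (r : Fin n) : γ t r = regularCurve k n t (r + 1) := hγ t r
  have hSL : S = twistedShift hn ((-1) ^ (k - 1)) := by
    funext x r
    rw [hS, twistedShift_apply]
  have shift (t : ℝ) : S (γ t) = γ (t - π / n) := by
    funext r
    rw [hS, hγc (t - π / n), regularCurve_sub_pi_div]
    split_ifs with h
    · rw [hγc]
      push_cast
      rfl
    · have hr : ((r : ℕ) : ℝ) + 1 = n := by exact_mod_cast (by omega : (r : ℕ) + 1 = n)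
      rw [hγc, hr, add_comm (n : ℝ), regularCurve_add_natCast hn.ne', Fin.val_mk, Nat.cast_zero,
        zero_add]
  refine ⟨shift, ?_⟩
  rw [hSL]
  refine (twistedShift hn _).image_span_range_eq_of_map_eq_comp
    (g := (· - π / n)) (fun t => ⟨t + π / n, add_sub_cancel_right t _⟩) fun t => ?_
  rw [← hSL, shift]

/-- The cyclic-symmetry computation from Proposition 6.6: for the regular tuple
`θ̃_p = pπ/n` and the top-cell curve `γ(t)_r = Π_{j=1}^{k−1} sin(t − (r+j)π/n)`
(coordinates indexed by `Fin n` via `r ↦ r+1 ∈ [n]`), the twisted cyclic shift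
`S(x_1,…,x_n) = (x_2,…,x_n,(−1)^{k−1}x_1)` satisfies `S(γ(t)) = γ(t − π/n)` for
all `t`; consequently `S` maps the linear span of the curve onto itself. -/
theorem regular_tuple_cyclic_symmetry (k n : ℕ) (hk : 1 ≤ k) (hkn : k ≤ n)
    (hn : 0 < n)
    (γ : ℝ → Fin n → ℝ)
    (hγ : ∀ t : ℝ, ∀ r : Fin n,
      γ t r = ∏ j ∈ Finset.Icc 1 (k - 1),
        Real.sin (t - (((r : ℕ) : ℝ) + 1 + (j : ℝ)) * Real.pi / n))
    (S : (Fin n → ℝ) → Fin n → ℝ)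
    (hS : ∀ x : Fin n → ℝ, ∀ r : Fin n,
      S x r = if h : (r : ℕ) + 1 < n then x ⟨(r : ℕ) + 1, h⟩
              else (-1 : ℝ) ^ (k - 1) * x ⟨0, hn⟩) :
    (∀ t : ℝ, S (γ t) = γ (t - Real.pi / n)) ∧
    S '' (Submodule.span ℝ (Set.range γ) : Set (Fin n → ℝ)) =
      (Submodule.span ℝ (Set.range γ) : Set (Fin n → ℝ)) :=
  regular_tuple_cyclic_symmetry_general k n hn γ hγ S hS
end
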